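/- arXiv:2411.11420 — 7 statements merged into one kernel-verified Lean document; each statement's English description precedes it below -/
import Mathlib

section
/- Let ε ∈ ℝ and let H : (0,∞) × ℝ² → ℝ, written H(u,x,y), be continuously differentiable and satisfy u·∂_uH(u,x,y) + ε·(x·∂_yH(u,x,y) − y·∂_xH(u,x,y)) + 2H(u,x,y) = 0 for all u > 0 and (x,y) ∈ ℝ². Then there exists a function F : ℂ → ℝ such that H(u,x,y) = u^{−2} · F( exp(−iε·log u)·(x+iy) ) for all u > 0 and (x,y) ∈ ℝ² (where exp and log are the complex exponential and the real logarithm, and x+iy ∈ ℂ). -/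
/-!
The PDE says that `(u, x, y) ↦ H` satisfies `X H = -2 H` for the vector field
`X = u ∂_u + ε (x ∂_y - y ∂_x)`, whose flow through `(1, z₀)` (writing `z = x + i y`) is
`t ↦ (eᵗ, e^{iεt} z₀)`. Along this characteristic `e^{2t} H` has derivative `e^{2t} (X H + 2 H) = 0`,
so `e^{2t} H(eᵗ, e^{iεt} z₀) = H(1, z₀)`. Taking `t = log u` and `z₀ = e^{-iε log u} (x + i y)`
gives the claim with `F z = H(1, z)`.
-/

open Complex in
theorem hasDerivAt_re_im_exp_mul_I (ε : ℝ) (z₀ : ℂ) (t : ℝ) :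
    HasDerivAt (fun t : ℝ => ((cexp (I * ε * t) * z₀).re, (cexp (I * ε * t) * z₀).im))
      (-ε * (cexp (I * ε * t) * z₀).im, ε * (cexp (I * ε * t) * z₀).re) t := by
  have hz : HasDerivAt (fun t : ℝ => cexp (I * ε * t) * z₀) (I * ε * (cexp (I * ε * t) * z₀)) t :=
    ((((hasDerivAt_id' t).ofReal_comp).const_mul (I * ε)).cexp.mul_const z₀).congr_deriv
      (by push_cast; ring)
  convert (reCLM.hasFDerivAt.comp_hasDerivAt t hz).prodMk
    (imCLM.hasFDerivAt.comp_hasDerivAt t hz) using 2 <;> simp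

theorem fderiv_apply_eq_sum_partialDerivs {G : Type*} [NormedAddCommGroup G] [NormedSpace ℝ G]
    {f : ℝ × ℝ × ℝ → G} {u x y : ℝ} (hf : DifferentiableAt ℝ f (u, x, y)) (v : ℝ × ℝ × ℝ) :
    fderiv ℝ f (u, x, y) v = v.1 • deriv (fun u' => f (u', x, y)) u
      + v.2.1 • deriv (fun x' => f (u, x', y)) x + v.2.2 • deriv (fun y' => f (u, x, y')) y := by
  have hu : deriv (fun u' => f (u', x, y)) u = fderiv ℝ f (u, x, y) (1, 0, 0) :=
    (hf.hasFDerivAt.comp_hasDerivAt u ((hasDerivAt_id' u).prodMk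
      ((hasDerivAt_const u x).prodMk (hasDerivAt_const u y)))).deriv
  have hx : deriv (fun x' => f (u, x', y)) x = fderiv ℝ f (u, x, y) (0, 1, 0) :=
    (hf.hasFDerivAt.comp_hasDerivAt x ((hasDerivAt_const x u).prodMk
      ((hasDerivAt_id' x).prodMk (hasDerivAt_const x y)))).deriv
  have hy : deriv (fun y' => f (u, x, y')) y = fderiv ℝ f (u, x, y) (0, 0, 1) :=
    (hf.hasFDerivAt.comp_hasDerivAt y ((hasDerivAt_const y u).prodMk
      ((hasDerivAt_const y x).prodMk (hasDerivAt_id' y)))).deriv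
  have hv : v = v.1 • ((1 : ℝ), (0 : ℝ), (0 : ℝ)) + v.2.1 • ((0 : ℝ), (1 : ℝ), (0 : ℝ))
      + v.2.2 • ((0 : ℝ), (0 : ℝ), (1 : ℝ)) := by
    simp
  rw [hu, hx, hy]
  conv_lhs => rw [hv]
  simp only [map_add, map_smul]

open Complex in
theorem exp_two_mul_mul_eq_along_characteristic (ε : ℝ) (H : ℝ → ℝ → ℝ → ℝ)
    (hdiff : ∀ p : ℝ × ℝ × ℝ, 0 < p.1 →
      DifferentiableAt ℝ (fun p : ℝ × ℝ × ℝ => H p.1 p.2.1 p.2.2) p)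
    (hpde : ∀ u x y : ℝ, 0 < u →
      u * deriv (fun u' => H u' x y) u
        + ε * (x * deriv (fun y' => H u x y') y - y * deriv (fun x' => H u x' y) x)
        + 2 * H u x y = 0)
    (z₀ : ℂ) (t : ℝ) :
    Real.exp (2 * t) * H (Real.exp t) (cexp (I * ε * t) * z₀).re (cexp (I * ε * t) * z₀).im
      = H 1 z₀.re z₀.im := by
  set g : ℝ → ℝ := fun t =>
    Real.exp (2 * t) * H (Real.exp t) (cexp (I * ε * t) * z₀).re (cexp (I * ε * t) * z₀).im
  have hg : ∀ s, HasDerivAt g 0 s := by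
    intro s
    have hexp2 : HasDerivAt (fun t => Real.exp (2 * t)) (Real.exp (2 * s) * 2) s :=
      ((hasDerivAt_id' s).const_mul 2).exp.congr_deriv (by ring)
    have hdiff_at := hdiff (Real.exp s, (cexp (I * ε * s) * z₀).re, (cexp (I * ε * s) * z₀).im)
      (Real.exp_pos s)
    have hH := hdiff_at.hasFDerivAt.comp_hasDerivAt s
      ((Real.hasDerivAt_exp s).prodMk (hasDerivAt_re_im_exp_mul_I ε z₀ s))
    rw [fderiv_apply_eq_sum_partialDerivs hdiff_at] at hH
    refine (hexp2.mul hH).congr_deriv ?_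
    simp only [smul_eq_mul, Function.comp_apply]
    linear_combination Real.exp (2 * s) * hpde (Real.exp s) _ _ (Real.exp_pos s)
  simpa [g] using
    is_const_of_deriv_eq_zero (fun s => (hg s).differentiableAt) (fun s => (hg s).deriv) t 0

/-- Case 3: pp-wave profile invariant under ε∂_θ + u∂_u − v∂_v. -/
theorem ppwave_case3_homothety_rotation_invariance
    (ε : ℝ) (H : ℝ → ℝ → ℝ → ℝ)
    (hH : ContDiffOn ℝ 1 (fun p : ℝ × ℝ × ℝ => H p.1 p.2.1 p.2.2)
      {p : ℝ × ℝ × ℝ | 0 < p.1})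
    (hpde : ∀ u x y : ℝ, 0 < u →
      u * deriv (fun u' => H u' x y) u
        + ε * (x * deriv (fun y' => H u x y') y - y * deriv (fun x' => H u x' y) x)
        + 2 * H u x y = 0) :
    ∃ F : ℂ → ℝ, ∀ u x y : ℝ, 0 < u →
      H u x y = (u ^ 2)⁻¹ *
        F (Complex.exp (-Complex.I * (ε : ℂ) * (Real.log u : ℂ))
            * ((x : ℂ) + (y : ℂ) * Complex.I)) := by
  have hdiff : ∀ p : ℝ × ℝ × ℝ, 0 < p.1 →
      DifferentiableAt ℝ (fun p : ℝ × ℝ × ℝ => H p.1 p.2.1 p.2.2) p := fun p hp =>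
    (hH.differentiableOn one_ne_zero).differentiableAt
      ((isOpen_lt continuous_const continuous_fst).mem_nhds hp)
  refine ⟨fun z => H 1 z.re z.im, fun u x y hu => ?_⟩
  have hrot : Complex.exp (Complex.I * ε * Real.log u)
      * (Complex.exp (-Complex.I * ε * Real.log u) * (x + y * Complex.I)) = x + y * Complex.I := by
    rw [← mul_assoc, ← Complex.exp_add, neg_mul, neg_mul, add_neg_cancel, Complex.exp_zero, one_mul]
  have hinv := exp_two_mul_mul_eq_along_characteristic ε H hdiff hpde
    (Complex.exp (-Complex.I * ε * Real.log u) * (x + y * Complex.I)) (Real.log u)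
  have hu2 : Real.exp (2 * Real.log u) = u ^ 2 := by
    rw [two_mul, Real.exp_add, Real.exp_log hu, sq]
  rw [hrot, Real.exp_log hu, hu2] at hinv
  simp only [Complex.add_re, Complex.add_im, Complex.ofReal_re, Complex.ofReal_im,
    Complex.mul_I_re, Complex.mul_I_im, neg_zero, add_zero, zero_add] at hinv
  exact (eq_inv_mul_iff_mul_eq₀ (by positivity)).2 hinv
end

section
/- Let ε ∈ ℝ and let H : ℝ × ℝ² → ℝ, written H(u,x,y), be continuously differentiable and satisfy ∂_uH(u,x,y) + ε·(x·∂_yH(u,x,y) − y·∂_xH(u,x,y)) = 0 for all (u,x,y) ∈ ℝ³. Then there exists a function F : ℂ → ℝ such that H(u,x,y) = F( exp(−iεu)·(x+iy) ) for all (u,x,y) ∈ ℝ³. -/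
/-!
The PDE says that the derivative of `H` along the screw field `∂_u + ε (x ∂_y - y ∂_x)` vanishes,
so `H` is constant along its integral curves `t ↦ (t, e^{iεt} w)`. Following the curve through
`(u, x + iy)` back to `u = 0` gives `H(u, x + iy) = H(0, e^{-iεu} (x + iy))`.
-/

open Complex

theorem eq_of_hasDerivAt_of_fderiv_apply_eq_zero {E : Type*} [NormedAddCommGroup E]
    [NormedSpace ℝ E] {f : E → ℝ} (hf : Differentiable ℝ f) {V : E → E}
    (hV : ∀ p, fderiv ℝ f p (V p) = 0) {γ : ℝ → E} (hγ : ∀ t, HasDerivAt γ (V (γ t)) t)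
    (s t : ℝ) : f (γ s) = f (γ t) := by
  have hderiv : ∀ t, HasDerivAt (f ∘ γ) 0 t := fun t => by
    simpa [hV] using (hf (γ t)).hasFDerivAt.comp_hasDerivAt t (hγ t)
  exact is_const_of_deriv_eq_zero (fun t => (hderiv t).differentiableAt)
    (fun t => (hderiv t).deriv) s t

def screwField (ε : ℝ) (p : ℝ × ℝ × ℝ) : ℝ × ℝ × ℝ := (1, -(ε * p.2.2), ε * p.2.1)

noncomputable def screwOrbit (ε : ℝ) (w : ℂ) (t : ℝ) : ℝ × ℝ × ℝ :=
  (t, (exp (ε * t * I) * w).re, (exp (ε * t * I) * w).im)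

theorem hasDerivAt_screwOrbit (ε : ℝ) (w : ℂ) (t : ℝ) :
    HasDerivAt (screwOrbit ε w) (screwField ε (screwOrbit ε w t)) t := by
  have hrot : HasDerivAt (fun t : ℝ => exp (ε * t * I) * w) (ε * I * (exp (ε * t * I) * w)) t := by
    have hlin : HasDerivAt (fun t : ℝ => (ε : ℂ) * t * I) (ε * I) t := by
      simpa using (((hasDerivAt_id t).ofReal_comp).const_mul (ε : ℂ)).mul_const I
    exact (hlin.cexp.mul_const w).congr_deriv (by ring)
  have hre := reCLM.hasFDerivAt.comp_hasDerivAt t hrot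
  have him := imCLM.hasFDerivAt.comp_hasDerivAt t hrot
  exact ((hasDerivAt_id t).prodMk (hre.prodMk him)).congr_deriv (by simp [screwField, screwOrbit])

theorem fderiv_apply_screwField {H : ℝ → ℝ → ℝ → ℝ} {u x y : ℝ}
    (hH : DifferentiableAt ℝ (fun p : ℝ × ℝ × ℝ => H p.1 p.2.1 p.2.2) (u, x, y)) (ε : ℝ) :
    fderiv ℝ (fun p : ℝ × ℝ × ℝ => H p.1 p.2.1 p.2.2) (u, x, y) (screwField ε (u, x, y))
      = deriv (fun u' => H u' x y) u
        + ε * (x * deriv (fun y' => H u x y') y - y * deriv (fun x' => H u x' y) x) := by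
  set f := fun p : ℝ × ℝ × ℝ => H p.1 p.2.1 p.2.2
  set L := fderiv ℝ f (u, x, y)
  have hu : deriv (fun u' => H u' x y) u = L (1, 0, 0) :=
    (hH.hasFDerivAt.comp_hasDerivAt (l := f) u
      ((hasDerivAt_id u).prodMk ((hasDerivAt_const u x).prodMk (hasDerivAt_const u y)))).deriv
  have hx : deriv (fun x' => H u x' y) x = L (0, 1, 0) :=
    (hH.hasFDerivAt.comp_hasDerivAt (l := f) x
      ((hasDerivAt_const x u).prodMk ((hasDerivAt_id x).prodMk (hasDerivAt_const x y)))).deriv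
  have hy : deriv (fun y' => H u x y') y = L (0, 0, 1) :=
    (hH.hasFDerivAt.comp_hasDerivAt (l := f) y
      ((hasDerivAt_const y u).prodMk ((hasDerivAt_const y x).prodMk (hasDerivAt_id y)))).deriv
  have hsplit : screwField ε (u, x, y)
      = (1, 0, 0) + (ε * x) • (0, 0, 1) - (ε * y) • (0, 1, 0) := by
    simp [screwField]
  rw [hu, hx, hy, hsplit, map_sub, map_add, map_smul, map_smul, smul_eq_mul, smul_eq_mul]
  ring

/-- Case 4: pp-wave profile invariant under ε∂_θ + ∂_u. -/
theorem ppwave_case4_screw_invariance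
    (ε : ℝ) (H : ℝ → ℝ → ℝ → ℝ)
    (hH : ContDiff ℝ 1 (fun p : ℝ × ℝ × ℝ => H p.1 p.2.1 p.2.2))
    (hpde : ∀ u x y : ℝ,
      deriv (fun u' => H u' x y) u
        + ε * (x * deriv (fun y' => H u x y') y - y * deriv (fun x' => H u x' y) x) = 0) :
    ∃ F : ℂ → ℝ, ∀ u x y : ℝ,
      H u x y = F (Complex.exp (-Complex.I * (ε : ℂ) * (u : ℂ))
        * ((x : ℂ) + (y : ℂ) * Complex.I)) := by
  have hf := hH.differentiable one_ne_zero
  have hinv : ∀ p, fderiv ℝ (fun p : ℝ × ℝ × ℝ => H p.1 p.2.1 p.2.2) p (screwField ε p) = 0 :=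
    fun ⟨u, x, y⟩ => by rw [fderiv_apply_screwField (hf _), hpde]
  refine ⟨fun w => H 0 w.re w.im, fun u x y => ?_⟩
  set w := exp (-I * ε * u) * (x + y * I)
  have hunwind : exp (ε * u * I) * w = x + y * I := by
    rw [← mul_assoc, ← Complex.exp_add, show (ε : ℂ) * u * I + -I * ε * u = 0 by ring,
      Complex.exp_zero, one_mul]
  have hconst := eq_of_hasDerivAt_of_fderiv_apply_eq_zero hf hinv (hasDerivAt_screwOrbit ε w) u 0
  simpa [screwOrbit, hunwind] using hconst
end

section
/- Let H : (0,∞) × (ℝ² ∖ {(0,0)}) → ℝ, written H(u,x,y), be continuously differentiable and satisfy both u·∂_uH(u,x,y) + 2H(u,x,y) = 0 and x·∂_yH(u,x,y) − y·∂_xH(u,x,y) = 0 for all u > 0 and (x,y) ≠ (0,0). Then there exists a function H₀ : (0,∞) → ℝ such that H(u,x,y) = H₀(√(x²+y²)) / u² for all u > 0 and (x,y) ≠ (0,0). -/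
/-!
Both PDEs say that a derivative along an orbit vanishes. In `u`, the function
`u ↦ u ^ 2 * H u x y` has derivative `u * (u ∂_u H + 2 H) = 0`, so `H u x y = H 1 x y / u ^ 2`.
Along the circle `θ ↦ (r cos θ, r sin θ)`, `θ ↦ H 1 (r cos θ) (r sin θ)` has derivative
`x ∂_y H - y ∂_x H = 0`, so `H 1 x y = H 1 r 0` with `r = √(x ^ 2 + y ^ 2)`, the point
`(x, y)` being reached at the angle `arg (x + y i)`.
-/

open Set

theorem rpow_mul_eq_of_mul_deriv_add_mul_eq_zero {f : ℝ → ℝ} {k : ℝ}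
    (hf : DifferentiableOn ℝ f (Ioi 0)) (h : ∀ u, 0 < u → u * deriv f u + k * f u = 0)
    {u : ℝ} (hu : 0 < u) : u ^ k * f u = f 1 := by
  have hderiv : ∀ v ∈ Ioi (0 : ℝ), HasDerivAt (fun v => v ^ k * f v) 0 v := by
    intro v hv
    have hv0 : v ≠ 0 := ne_of_gt hv
    have hfv := (hf.differentiableAt (isOpen_Ioi.mem_nhds hv)).hasDerivAt
    refine ((Real.hasDerivAt_rpow_const (p := k) (Or.inl hv0)).mul hfv).congr_deriv ?_
    rw [Real.rpow_sub_one hv0]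
    field_simp
    linear_combination v ^ k * h v hv
  have hconst := isOpen_Ioi.is_const_of_deriv_eq_zero isPreconnected_Ioi
    (fun v hv => (hderiv v hv).differentiableAt.differentiableWithinAt)
    (fun v hv => (hderiv v hv).deriv) (mem_Ioi.2 hu) (mem_Ioi.2 one_pos)
  simpa using hconst

theorem hasDerivAt_comp_of_differentiableAt_uncurry {G : ℝ → ℝ → ℝ} {x y : ℝ}
    (hG : DifferentiableAt ℝ (fun p : ℝ × ℝ => G p.1 p.2) (x, y))
    {α β : ℝ → ℝ} {a b t : ℝ}
    (hα : HasDerivAt α a t) (hβ : HasDerivAt β b t) (hαt : α t = x) (hβt : β t = y) :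
    HasDerivAt (fun t => G (α t) (β t))
      (a * deriv (fun x' => G x' y) x + b * deriv (fun y' => G x y') y) t := by
  set L := fderiv ℝ (fun p : ℝ × ℝ => G p.1 p.2) (x, y)
  have hfd : HasFDerivAt (fun p : ℝ × ℝ => G p.1 p.2) L (x, y) := hG.hasFDerivAt
  have hx : HasDerivAt (fun x' => G x' y) (L (1, 0)) x :=
    hfd.comp_hasDerivAt (f := fun x' => (x', y)) x
      ((hasDerivAt_id x).prodMk (hasDerivAt_const x y))
  have hy : HasDerivAt (fun y' => G x y') (L (0, 1)) y :=
    hfd.comp_hasDerivAt (f := fun y' => (x, y')) y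
      ((hasDerivAt_const y x).prodMk (hasDerivAt_id y))
  subst hαt hβt
  refine (hfd.comp_hasDerivAt (f := fun t => (α t, β t)) t (hα.prodMk hβ)).congr_deriv ?_
  rw [hx.deriv, hy.deriv, ← smul_eq_mul, ← smul_eq_mul, ← L.map_smul, ← L.map_smul,
    ← map_add]
  simp

theorem apply_eq_apply_sqrt_zero_of_rotation_invariant {F : ℝ → ℝ → ℝ}
    (hF : DifferentiableOn ℝ (fun p : ℝ × ℝ => F p.1 p.2) {0}ᶜ)
    (hrot : ∀ x y, (x, y) ≠ 0 →
      x * deriv (fun y' => F x y') y - y * deriv (fun x' => F x' y) x = 0)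
    {x y : ℝ} (hxy : (x, y) ≠ 0) : F x y = F √(x ^ 2 + y ^ 2) 0 := by
  set r := √(x ^ 2 + y ^ 2)
  set z : ℂ := ⟨x, y⟩
  have hzr : ‖z‖ = r := Complex.norm_eq_sqrt_sq_add_sq z
  have hcircle : ∀ θ, (r * Real.cos θ, r * Real.sin θ) ≠ 0 := by
    intro θ hθ
    have hr : r ≠ 0 := by
      rw [← hzr, norm_ne_zero_iff]
      exact fun hz => hxy (Prod.ext (congrArg Complex.re hz) (congrArg Complex.im hz))
    obtain ⟨hcos, hsin⟩ := Prod.mk_eq_zero.1 hθ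
    refine hr (pow_eq_zero_iff two_ne_zero |>.1 ?_)
    linear_combination (r * Real.sin θ) * hsin + (r * Real.cos θ) * hcos
      - r ^ 2 * Real.sin_sq_add_cos_sq θ
  have hg : ∀ θ, HasDerivAt (fun θ => F (r * Real.cos θ) (r * Real.sin θ)) 0 θ := by
    intro θ
    refine (hasDerivAt_comp_of_differentiableAt_uncurry
      (hF.differentiableAt (isOpen_compl_singleton.mem_nhds (hcircle θ)))
      ((Real.hasDerivAt_cos θ).const_mul r) ((Real.hasDerivAt_sin θ).const_mul r)
      rfl rfl).congr_deriv ?_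
    linear_combination hrot _ _ (hcircle θ)
  have hconst := is_const_of_deriv_eq_zero (fun θ => (hg θ).differentiableAt)
    (fun θ => (hg θ).deriv) (Complex.arg z) 0
  rw [← hzr, Complex.norm_mul_cos_arg, Complex.norm_mul_sin_arg, Real.cos_zero, Real.sin_zero,
    mul_one, mul_zero, hzr] at hconst
  exact hconst

/-- Case 5: pp-wave profile invariant under u∂_u − v∂_v and ∂_θ. -/
theorem ppwave_case5_invariance
    (H : ℝ → ℝ → ℝ → ℝ)
    (hH : ContDiffOn ℝ 1 (fun p : ℝ × ℝ × ℝ => H p.1 p.2.1 p.2.2)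
      {p : ℝ × ℝ × ℝ | 0 < p.1 ∧ (p.2.1, p.2.2) ≠ ((0 : ℝ), (0 : ℝ))})
    (hpde1 : ∀ u x y : ℝ, 0 < u → (x, y) ≠ ((0 : ℝ), (0 : ℝ)) →
      u * deriv (fun u' => H u' x y) u + 2 * H u x y = 0)
    (hpde2 : ∀ u x y : ℝ, 0 < u → (x, y) ≠ ((0 : ℝ), (0 : ℝ)) →
      x * deriv (fun y' => H u x y') y - y * deriv (fun x' => H u x' y) x = 0) :
    ∃ H₀ : ℝ → ℝ, ∀ u x y : ℝ, 0 < u → (x, y) ≠ ((0 : ℝ), (0 : ℝ)) →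
      H u x y = H₀ (Real.sqrt (x ^ 2 + y ^ 2)) / u ^ 2 := by
  have hdiff := hH.differentiableOn one_ne_zero
  refine ⟨fun r => H 1 r 0, fun u x y hu hxy => ?_⟩
  have hscale : u ^ (2 : ℝ) * H u x y = H 1 x y :=
    rpow_mul_eq_of_mul_deriv_add_mul_eq_zero
      (hdiff.comp (f := fun u' => (u', x, y)) (by fun_prop) fun u' hu' => ⟨hu', hxy⟩)
      (fun u' hu' => hpde1 u' x y hu' hxy) hu
  have hrot : H 1 x y = H 1 √(x ^ 2 + y ^ 2) 0 :=
    apply_eq_apply_sqrt_zero_of_rotation_invariant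
      (hdiff.comp (f := fun p : ℝ × ℝ => (1, p.1, p.2)) (by fun_prop)
        fun p hp => ⟨one_pos, hp⟩)
      (fun x' y' hxy' => hpde2 1 x' y' one_pos hxy') hxy
  rw [Real.rpow_two] at hscale
  rw [eq_div_iff (pow_ne_zero 2 hu.ne')]
  linear_combination hscale + hrot
end

section
/- Let ε ∈ ℝ and let Ω = ℝ² ∖ {(x,0) : x ≤ 0} be the plane with the non-positive real axis removed. Let H : Ω → ℝ be continuously differentiable and satisfy x·∂_yH(x,y) − y·∂_xH(x,y) = 2ε·H(x,y) for all (x,y) ∈ Ω. Then there exists a function H₀ : (0,∞) → ℝ such that H(x,y) = H₀(√(x²+y²)) · exp(2ε·arg(x+iy)) for all (x,y) ∈ Ω, where arg denotes the principal argument of a complex number, taking values in (−π, π]. -/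
/-!
On the circle of radius `r`, the equation `x ∂_y H − y ∂_x H = 2εH` says that
`g s = H (r cos s) (r sin s)` solves `g' = 2ε g` on `(-π, π)`, the range of the principal argument
on the slit plane. Hence `H (r cos θ) (r sin θ) = H r 0 * exp (2εθ)`, and writing `(x, y)` in polar
coordinates through `Complex.arg` gives the claim with `H₀ r = H r 0`.
-/

open Real Set

theorem DifferentiableAt.fderiv_apply_eq_partials {E : Type*} [NormedAddCommGroup E]
    [NormedSpace ℝ E] {f : ℝ × ℝ → E} {x y : ℝ} (hf : DifferentiableAt ℝ f (x, y)) (a b : ℝ) :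
    fderiv ℝ f (x, y) (a, b) =
      a • deriv (fun x' => f (x', y)) x + b • deriv (fun y' => f (x, y')) y := by
  have hx : HasDerivAt (fun x' => f (x', y)) (fderiv ℝ f (x, y) (1, 0)) x :=
    hf.hasFDerivAt.comp_hasDerivAt x ((hasDerivAt_id x).prodMk (hasDerivAt_const x y))
  have hy : HasDerivAt (fun y' => f (x, y')) (fderiv ℝ f (x, y) (0, 1)) y :=
    hf.hasFDerivAt.comp_hasDerivAt y ((hasDerivAt_const y x).prodMk (hasDerivAt_id y))
  have hab : ((a, b) : ℝ × ℝ) = a • ((1 : ℝ), (0 : ℝ)) + b • ((0 : ℝ), (1 : ℝ)) := by simp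
  rw [hx.deriv, hy.deriv, hab, map_add, map_smul, map_smul]

theorem hasDerivAt_comp_circle {E : Type*} [NormedAddCommGroup E]
    [NormedSpace ℝ E] {f : ℝ × ℝ → E} {r t : ℝ}
    (hf : DifferentiableAt ℝ f (r * cos t, r * sin t)) :
    HasDerivAt (fun s => f (r * cos s, r * sin s))
      ((r * cos t) • deriv (fun y => f (r * cos t, y)) (r * sin t)
        - (r * sin t) • deriv (fun x => f (x, r * sin t)) (r * cos t)) t := by
  have hcos : HasDerivAt (fun s => r * cos s) (-(r * sin t)) t := by
    simpa using (hasDerivAt_cos t).const_mul r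
  have hγ := hcos.prodMk ((hasDerivAt_sin t).const_mul r)
  refine (hf.hasFDerivAt.comp_hasDerivAt t hγ).congr_deriv ?_
  rw [hf.fderiv_apply_eq_partials, neg_smul]
  abel

theorem IsOpen.eq_mul_exp_of_hasDerivAt {s : Set ℝ} {g : ℝ → ℝ} {c a t : ℝ} (hs : IsOpen s)
    (hs' : IsPreconnected s) (hg : ∀ u ∈ s, HasDerivAt g (c * g u) u) (ha : a ∈ s)
    (ht : t ∈ s) : g t = g a * exp (c * (t - a)) := by
  have hderiv : ∀ u ∈ s, HasDerivAt (fun v => g v * exp (-(c * v))) 0 u := fun u hu => by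
    refine ((hg u hu).mul ((hasDerivAt_id' u).const_mul c).neg.exp).congr_deriv ?_
    ring
  have hconst : g t * exp (-(c * t)) = g a * exp (-(c * a)) :=
    hs.is_const_of_deriv_eq_zero hs'
      (fun u hu => (hderiv u hu).differentiableAt.differentiableWithinAt)
      (fun u hu => (hderiv u hu).deriv) ht ha
  calc g t = g t * exp (-(c * t)) * exp (c * t) := by rw [mul_assoc, ← exp_add]; simp
    _ = g a * exp (c * (t - a)) := by rw [hconst, mul_assoc, ← exp_add]; ring_nf

theorem Complex.ofReal_add_mul_I_mem_slitPlane_iff {x y : ℝ} :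
    (x + y * Complex.I : ℂ) ∈ Complex.slitPlane ↔ ¬(y = 0 ∧ x ≤ 0) := by
  simp [Complex.mem_slitPlane_iff, or_comm, imp_iff_not_or]

theorem Complex.mul_cos_add_mul_sin_mul_I_mem_slitPlane {r t : ℝ} (hr : 0 < r)
    (ht : t ∈ Ioo (-π) π) :
    (r * cos t + r * sin t * Complex.I : ℂ) ∈ Complex.slitPlane := by
  have h : (r * cos t + r * sin t * Complex.I : ℂ) = r * (cos t + sin t * Complex.I) := by ring
  rw [Complex.mem_slitPlane_iff_arg, h,
    Complex.arg_mul_cos_add_sin_mul_I hr (Ioo_subset_Ioc_self ht)]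
  exact ⟨ht.2.ne, by simp [hr.ne', Complex.cos_add_sin_I]⟩

theorem isOpen_setOf_not_snd_eq_zero_and_fst_nonpos :
    IsOpen {p : ℝ × ℝ | ¬(p.2 = 0 ∧ p.1 ≤ 0)} := by
  convert Complex.isOpen_slitPlane.preimage
    (by fun_prop : Continuous fun p : ℝ × ℝ => (p.1 + p.2 * Complex.I : ℂ)) using 1
  ext p
  exact Complex.ofReal_add_mul_I_mem_slitPlane_iff.symm

/-- Case 7: u-independent pp-wave profile with x∂_y H − y∂_x H = 2εH on the slit plane. -/
theorem ppwave_case7_invariance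
    (ε : ℝ) (H : ℝ → ℝ → ℝ)
    (hH : ContDiffOn ℝ 1 (fun p : ℝ × ℝ => H p.1 p.2)
      {p : ℝ × ℝ | ¬(p.2 = 0 ∧ p.1 ≤ 0)})
    (hpde : ∀ x y : ℝ, ¬(y = 0 ∧ x ≤ 0) →
      x * deriv (fun y' => H x y') y - y * deriv (fun x' => H x' y) x = 2 * ε * H x y) :
    ∃ H₀ : ℝ → ℝ, ∀ x y : ℝ, ¬(y = 0 ∧ x ≤ 0) →
      H x y = H₀ (Real.sqrt (x ^ 2 + y ^ 2))
        * Real.exp (2 * ε * Complex.arg ((x : ℂ) + (y : ℂ) * Complex.I)) := by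
  have hcircle (r : ℝ) (hr : 0 < r) (t : ℝ) (ht : t ∈ Ioo (-π) π) :
      HasDerivAt (fun s => H (r * cos s) (r * sin s)) (2 * ε * H (r * cos t) (r * sin t)) t := by
    have hmem : (r * cos t, r * sin t) ∈ {p : ℝ × ℝ | ¬(p.2 = 0 ∧ p.1 ≤ 0)} :=
      Complex.ofReal_add_mul_I_mem_slitPlane_iff.mp
        (by exact_mod_cast Complex.mul_cos_add_mul_sin_mul_I_mem_slitPlane hr ht)
    have hdiff := (hH.differentiableOn one_ne_zero _ hmem).differentiableAt
      (isOpen_setOf_not_snd_eq_zero_and_fst_nonpos.mem_nhds hmem)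
    simpa only [smul_eq_mul, hpde _ _ hmem] using hasDerivAt_comp_circle hdiff
  refine ⟨fun r => H r 0, fun x y hxy => ?_⟩
  set z : ℂ := x + y * Complex.I
  have hz : z ∈ Complex.slitPlane := Complex.ofReal_add_mul_I_mem_slitPlane_iff.mpr hxy
  have harg : z.arg ∈ Ioo (-π) π :=
    ⟨Complex.neg_pi_lt_arg z, (Complex.arg_le_pi z).lt_of_ne (Complex.slitPlane_arg_ne_pi hz)⟩
  have hr : 0 < ‖z‖ := norm_pos_iff.mpr (Complex.slitPlane_ne_zero hz)
  have hx : x = ‖z‖ * cos z.arg := by simp [Complex.norm_mul_cos_arg, z]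
  have hy : y = ‖z‖ * sin z.arg := by simp [Complex.norm_mul_sin_arg, z]
  have hsolve := isOpen_Ioo.eq_mul_exp_of_hasDerivAt isPreconnected_Ioo (hcircle ‖z‖ hr)
    ⟨neg_neg_of_pos pi_pos, pi_pos⟩ harg
  rw [← Complex.norm_add_mul_I]
  conv_lhs => rw [hx, hy]
  simpa using hsolve
end

section
/- Let ρ, σ, ε ∈ ℝ with ρ ≠ 0, and let H : ℝ² → ℝ be continuously differentiable with ρ·∂_xH(x,y) + σ·∂_yH(x,y) = −2ε·H(x,y) for all (x,y) ∈ ℝ². Then there exists a function H₀ : ℝ → ℝ such that H(x,y) = H₀(ρy − σx)·exp(−(2ε/ρ)·x) for all (x,y) ∈ ℝ². -/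
/-!
The equation says that the derivative of `H` in the direction `(ρ, σ)` is `-2ε H`, so along each
characteristic line `t ↦ p + t (ρ, σ)` the function `H` is an exponential `H p · exp (-2ε t)`.
Since `ρ ≠ 0`, every such line meets the axis `x = 0`: the one through `(x, y)` starts there at
`(0, (ρ y - σ x) / ρ)` and reaches `(x, y)` at time `t = x / ρ`, which gives `H₀ s = H (0, s / ρ)`.
-/

open Real

theorem fderiv_prod_apply_eq_partials {F : Type*} [NormedAddCommGroup F] [NormedSpace ℝ F]
    {f : ℝ × ℝ → F} {a b : ℝ} (hf : DifferentiableAt ℝ f (a, b)) (ρ σ : ℝ) :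
    fderiv ℝ f (a, b) (ρ, σ) =
      ρ • deriv (fun x => f (x, b)) a + σ • deriv (fun y => f (a, y)) b := by
  have hx : HasDerivAt (fun x => f (x, b)) (fderiv ℝ f (a, b) (1, 0)) a :=
    hf.hasFDerivAt.comp_hasDerivAt a ((hasDerivAt_id a).prodMk (hasDerivAt_const a b))
  have hy : HasDerivAt (fun y => f (a, y)) (fderiv ℝ f (a, b) (0, 1)) b :=
    hf.hasFDerivAt.comp_hasDerivAt b ((hasDerivAt_const b a).prodMk (hasDerivAt_id b))
  have hsplit : ((ρ, σ) : ℝ × ℝ) = ρ • ((1 : ℝ), (0 : ℝ)) + σ • ((0 : ℝ), (1 : ℝ)) := by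
    simp
  rw [hx.deriv, hy.deriv, hsplit, map_add, map_smul, map_smul]

theorem eq_mul_exp_of_hasDerivAt_mul_self {g : ℝ → ℝ} {c : ℝ}
    (hg : ∀ t, HasDerivAt g (c * g t) t) (t : ℝ) : g t = g 0 * exp (c * t) := by
  have hzero : ∀ s, HasDerivAt (fun s => g s * exp (-(c * s))) 0 s := by
    intro s
    have he : HasDerivAt (fun s => exp (-(c * s))) (exp (-(c * s)) * -c) s := by
      simpa using ((hasDerivAt_id s).const_mul c).neg.exp
    have h := (hg s).mul he
    rwa [show c * g s * exp (-(c * s)) + g s * (exp (-(c * s)) * -c) = 0 by ring] at h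
  have hconst := is_const_of_deriv_eq_zero (fun s => (hzero s).differentiableAt)
    (fun s => (hzero s).deriv) t 0
  simp only [mul_zero, neg_zero, exp_zero, mul_one] at hconst
  rw [← hconst, mul_assoc, ← exp_add, neg_add_cancel, exp_zero, mul_one]

theorem apply_add_smul_eq_mul_exp {E : Type*} [NormedAddCommGroup E] [NormedSpace ℝ E]
    {f : E → ℝ} (hf : Differentiable ℝ f) {v : E} {k : ℝ}
    (hdir : ∀ p, fderiv ℝ f p v = k * f p) (p : E) (t : ℝ) :
    f (p + t • v) = f p * exp (k * t) := by
  have hline : ∀ s, HasDerivAt (fun s : ℝ => f (p + s • v)) (k * f (p + s • v)) s := by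
    intro s
    have hpath : HasDerivAt (fun s : ℝ => p + s • v) v s := by
      simpa using ((hasDerivAt_id s).smul_const v).const_add p
    rw [← hdir]
    exact (hf _).hasFDerivAt.comp_hasDerivAt s hpath
  simpa using eq_mul_exp_of_hasDerivAt_mul_self hline t

/-- Case 8 (ε ≠ 0): u-independent pp-wave profile with ρ∂_x H + σ∂_y H = −2εH. -/
theorem ppwave_case8_eps_nonzero
    (ρ σ ε : ℝ) (hρ : ρ ≠ 0)
    (H : ℝ → ℝ → ℝ)
    (hH : ContDiff ℝ 1 (fun p : ℝ × ℝ => H p.1 p.2))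
    (hpde : ∀ x y : ℝ,
      ρ * deriv (fun x' => H x' y) x + σ * deriv (fun y' => H x y') y
        = -(2 * ε) * H x y) :
    ∃ H₀ : ℝ → ℝ, ∀ x y : ℝ,
      H x y = H₀ (ρ * y - σ * x) * Real.exp (-(2 * ε / ρ) * x) := by
  have hdiff : Differentiable ℝ (fun p : ℝ × ℝ => H p.1 p.2) := hH.differentiable one_ne_zero
  have hdir : ∀ p : ℝ × ℝ, fderiv ℝ (fun p : ℝ × ℝ => H p.1 p.2) p (ρ, σ) = -(2 * ε) * H p.1 p.2 :=
    fun ⟨a, b⟩ => by rw [fderiv_prod_apply_eq_partials (hdiff (a, b))]; exact hpde a b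
  refine ⟨fun s => H 0 (s / ρ), fun x y => ?_⟩
  have hchar := apply_add_smul_eq_mul_exp hdiff hdir (0, (ρ * y - σ * x) / ρ) (x / ρ)
  have hpoint : ((0 : ℝ), (ρ * y - σ * x) / ρ) + (x / ρ) • (ρ, σ) = (x, y) := by
    ext <;> simp [field]
  rw [hpoint] at hchar
  rw [hchar]
  ring_nf
end

section
/- Let f₁, f₂ : ℝ → ℝ be twice differentiable, let m₁, m₂, m₃, m₄ : ℝ → ℝ be differentiable, and let a, b, c : ℝ → ℝ. Suppose that for all u ∈ ℝ: f₁′(u) = −√2·(m₁(u)f₁(u) + m₃(u)f₂(u)), f₂′(u) = −√2·(m₂(u)f₁(u) + m₄(u)f₂(u)), f₁″(u) = −2·(a(u)f₁(u) + c(u)f₂(u)), and f₂″(u) = −2·(c(u)f₁(u) + b(u)f₂(u)). Then for all u ∈ ℝ: f₁(u)·(m₁′(u) − √2·a(u) − √2·m₁(u)² − √2·m₂(u)m₃(u)) + f₂(u)·(m₃′(u) − √2·c(u) − √2·(m₁(u)+m₄(u))·m₃(u)) = 0, and f₁(u)·(m₂′(u) − √2·c(u) − √2·(m₁(u)+m₄(u))·m₂(u))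 + f₂(u)·(m₄′(u) − √2·b(u) − √2·m₄(u)² − √2·m₂(u)m₃(u)) = 0. -/
/-- Case 10: compatibility conditions obtained by differentiating the first-order
affine symmetry system and substituting into the second-order Killing system. -/
theorem ppwave_case10_compatibility
    (f₁ f₂ m₁ m₂ m₃ m₄ a b c : ℝ → ℝ)
    (hf₁ : Differentiable ℝ f₁) (hf₂ : Differentiable ℝ f₂)
    (hf₁' : Differentiable ℝ (deriv f₁)) (hf₂' : Differentiable ℝ (deriv f₂))
    (hm₁ : Differentiable ℝ m₁) (hm₂ : Differentiable ℝ m₂)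
    (hm₃ : Differentiable ℝ m₃) (hm₄ : Differentiable ℝ m₄)
    (h1 : ∀ u, deriv f₁ u = -Real.sqrt 2 * (m₁ u * f₁ u + m₃ u * f₂ u))
    (h2 : ∀ u, deriv f₂ u = -Real.sqrt 2 * (m₂ u * f₁ u + m₄ u * f₂ u))
    (h3 : ∀ u, deriv (deriv f₁) u = -2 * (a u * f₁ u + c u * f₂ u))
    (h4 : ∀ u, deriv (deriv f₂) u = -2 * (c u * f₁ u + b u * f₂ u)) :
    ∀ u,
      f₁ u * (deriv m₁ u - Real.sqrt 2 * a u - Real.sqrt 2 * (m₁ u) ^ 2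
          - Real.sqrt 2 * m₂ u * m₃ u)
        + f₂ u * (deriv m₃ u - Real.sqrt 2 * c u
          - Real.sqrt 2 * (m₁ u + m₄ u) * m₃ u) = 0 ∧
      f₁ u * (deriv m₂ u - Real.sqrt 2 * c u
          - Real.sqrt 2 * (m₁ u + m₄ u) * m₂ u)
        + f₂ u * (deriv m₄ u - Real.sqrt 2 * b u - Real.sqrt 2 * (m₄ u) ^ 2
          - Real.sqrt 2 * m₂ u * m₃ u) = 0 := by
  intro u
  set s := Real.sqrt 2 with hs
  have hs2 : s * s = 2 := Real.mul_self_sqrt (by norm_num)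
  have hsne : s ≠ 0 := by
    intro h; rw [h] at hs2; norm_num at hs2
  -- derivative of the RHS of h1
  have D1 : HasDerivAt (fun u => -s * (m₁ u * f₁ u + m₃ u * f₂ u))
      (-s * ((deriv m₁ u * f₁ u + m₁ u * deriv f₁ u)
        + (deriv m₃ u * f₂ u + m₃ u * deriv f₂ u))) u :=
    (((hm₁ u).hasDerivAt.mul (hf₁ u).hasDerivAt).add
      ((hm₃ u).hasDerivAt.mul (hf₂ u).hasDerivAt)).const_mul (-s)
  have D2 : HasDerivAt (fun u => -s * (m₂ u * f₁ u + m₄ u * f₂ u))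
      (-s * ((deriv m₂ u * f₁ u + m₂ u * deriv f₁ u)
        + (deriv m₄ u * f₂ u + m₄ u * deriv f₂ u))) u :=
    (((hm₂ u).hasDerivAt.mul (hf₁ u).hasDerivAt).add
      ((hm₄ u).hasDerivAt.mul (hf₂ u).hasDerivAt)).const_mul (-s)
  have e1 : deriv f₁ = fun u => -s * (m₁ u * f₁ u + m₃ u * f₂ u) := funext h1
  have e2 : deriv f₂ = fun u => -s * (m₂ u * f₁ u + m₄ u * f₂ u) := funext h2
  have E1 : deriv (deriv f₁) u = -s * ((deriv m₁ u * f₁ u + m₁ u * deriv f₁ u)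
        + (deriv m₃ u * f₂ u + m₃ u * deriv f₂ u)) := by
    conv_lhs => rw [e1]
    exact D1.deriv
  have E2 : deriv (deriv f₂) u = -s * ((deriv m₂ u * f₁ u + m₂ u * deriv f₁ u)
        + (deriv m₄ u * f₂ u + m₄ u * deriv f₂ u)) := by
    conv_lhs => rw [e2]
    exact D2.deriv
  rw [h3 u] at E1
  rw [h4 u] at E2
  rw [h1 u, h2 u] at E1 E2
  constructor
  · have key : s * (f₁ u * (deriv m₁ u - s * a u - s * (m₁ u) ^ 2
          - s * m₂ u * m₃ u)
        + f₂ u * (deriv m₃ u - s * c u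
          - s * (m₁ u + m₄ u) * m₃ u)) = 0 := by
      linear_combination E1 - (a u * f₁ u + c u * f₂ u) * hs2
    exact (mul_eq_zero.mp key).resolve_left hsne
  · have key : s * (f₁ u * (deriv m₂ u - s * c u
          - s * (m₁ u + m₄ u) * m₂ u)
        + f₂ u * (deriv m₄ u - s * b u - s * (m₄ u) ^ 2
          - s * m₂ u * m₃ u)) = 0 := by
      linear_combination E2 - (c u * f₁ u + b u * f₂ u) * hs2
    exact (mul_eq_zero.mp key).resolve_left hsne
end

section
/- Let M : ℝ³ → ℂ, written M(u,x,y), and H : ℝ³ → ℝ, written H(u,x,y), be continuously differentiable. Suppose that for all (u,x,y) ∈ ℝ³: (i) ∂_x(Re M) = 0, ∂_y(Im M) = 0, ∂_x(Im M) = 0, ∂_y(Re M) = 0; (ii) ∂_x M̄ − i·∂_y M̄ = 0 (where M̄ denotes the complex conjugate of M); and (iii) M̄·(∂_x M̄ + i·∂_y M̄) + M·(∂_x M̄ − i·∂_y M̄) − ∂_u M̄ + ∂_xH − i·∂_yH = 0. Then there exist a differentiable function M₀ : ℝ → ℂ and a function h : ℝ → ℝ such that M(u,x,y) = M₀(u)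 and H(u,x,y) = x·Re(M₀′(u)) + y·Im(M₀′(u)) + h(u) for all (u,x,y); moreover, in this case also ∂_x(Re M) − i·∂_y(Im M) = 0 and ∂_x(Im M) − i·∂_y(Re M) = 0 hold identically, so that all components of the torsion tensor vanish. -/
/-!
Since the `x`- and `y`-derivatives of `Re M` and `Im M` vanish, `M = M₀(u)`. Then `T̂₂₂₃ = 0`
collapses to `∂ₓH - i ∂_y H = conj M₀'(u)`, which integrates to `H = x Re M₀' + y Im M₀' + h(u)`.
The vector and axial parts are built from the same vanishing derivatives of `M`.
-/

open Complex

lemma deriv_ofReal_comp (f : ℝ → ℝ) (x : ℝ) :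
    deriv (fun t => (f t : ℂ)) x = deriv f x := by
  by_cases hf : DifferentiableAt ℝ f x
  · exact hf.hasDerivAt.ofReal_comp.deriv
  · have hf' : ¬ DifferentiableAt ℝ (fun t => (f t : ℂ)) x := fun h =>
      hf (reCLM.differentiableAt.comp x h)
    rw [deriv_zero_of_not_differentiableAt hf, deriv_zero_of_not_differentiableAt hf', ofReal_zero]

lemma deriv_re_comp {f : ℝ → ℂ} {x : ℝ} (hf : DifferentiableAt ℝ f x) :
    deriv (fun t => (f t).re) x = (deriv f x).re := by
  simpa [Function.comp_def] using (reCLM.hasFDerivAt.comp_hasDerivAt x hf.hasDerivAt).deriv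

lemma deriv_im_comp {f : ℝ → ℂ} {x : ℝ} (hf : DifferentiableAt ℝ f x) :
    deriv (fun t => (f t).im) x = (deriv f x).im := by
  simpa [Function.comp_def] using (imCLM.hasFDerivAt.comp_hasDerivAt x hf.hasDerivAt).deriv

lemma eq_of_deriv_re_eq_zero_of_deriv_im_eq_zero {f : ℝ → ℂ} (hf : Differentiable ℝ f)
    (hre : ∀ t, deriv (fun s => (f s).re) t = 0) (him : ∀ t, deriv (fun s => (f s).im) t = 0)
    (a b : ℝ) : f a = f b :=
  is_const_of_deriv_eq_zero hf (fun t => Complex.ext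
    (by rw [zero_re, ← deriv_re_comp (hf t), hre])
    (by rw [zero_im, ← deriv_im_comp (hf t), him])) a b

lemma eq_mul_add_of_deriv_eq {f : ℝ → ℝ} {c : ℝ} (hf : Differentiable ℝ f)
    (hderiv : ∀ t, deriv f t = c) (x : ℝ) : f x = x * c + f 0 := by
  have hg : Differentiable ℝ (fun t => f t - t * c) := by fun_prop
  have hg' : ∀ t, deriv (fun t => f t - t * c) t = 0 := fun t => by
    rw [deriv_fun_sub (hf t) (by fun_prop), hderiv, deriv_mul_const_field, deriv_id'', one_mul,
      sub_self]
  have := is_const_of_deriv_eq_zero hg hg' x 0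
  linarith

lemma ofReal_sub_I_mul_ofReal_eq_conj_iff {a b : ℝ} {z : ℂ} :
    (a : ℂ) - I * b = starRingEnd ℂ z ↔ a = z.re ∧ b = z.im := by
  simp [Complex.ext_iff]

lemma eq_mul_add_mul_add_of_deriv_eq {f : ℝ → ℝ → ℝ} {a b : ℝ}
    (hfx : ∀ y, Differentiable ℝ (f · y)) (hfy : ∀ x, Differentiable ℝ (f x))
    (hx : ∀ x y, deriv (f · y) x = a) (hy : ∀ x y, deriv (f x) y = b) (x y : ℝ) :
    f x y = x * a + y * b + f 0 0 := by
  rw [eq_mul_add_of_deriv_eq (hfx y) (hx · y) x, eq_mul_add_of_deriv_eq (hfy 0) (hy 0) y]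
  ring

lemma exists_forall_eq_of_deriv_re_im_eq_zero {M : ℝ → ℝ → ℝ → ℂ}
    (hM : Differentiable ℝ fun p : ℝ × ℝ × ℝ => M p.1 p.2.1 p.2.2)
    (hx_re : ∀ u x y, deriv (fun x' => (M u x' y).re) x = 0)
    (hy_im : ∀ u x y, deriv (fun y' => (M u x y').im) y = 0)
    (hx_im : ∀ u x y, deriv (fun x' => (M u x' y).im) x = 0)
    (hy_re : ∀ u x y, deriv (fun y' => (M u x y').re) y = 0) :
    ∃ M₀ : ℝ → ℂ, Differentiable ℝ M₀ ∧ ∀ u x y, M u x y = M₀ u := by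
  have hMx (u y : ℝ) : Differentiable ℝ (fun x' => M u x' y) :=
    hM.comp (by fun_prop : Differentiable ℝ fun x' : ℝ => (u, x', y))
  have hMy (u x : ℝ) : Differentiable ℝ (fun y' => M u x y') :=
    hM.comp (by fun_prop : Differentiable ℝ fun y' : ℝ => (u, x, y'))
  refine ⟨fun u => M u 0 0,
    hM.comp (by fun_prop : Differentiable ℝ fun u : ℝ => (u, (0 : ℝ), (0 : ℝ))), fun u x y => ?_⟩
  calc M u x y = M u 0 y :=
        eq_of_deriv_re_eq_zero_of_deriv_im_eq_zero (hMx u y) (hx_re u · y) (hx_im u · y) x 0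
    _ = M u 0 0 := eq_of_deriv_re_eq_zero_of_deriv_im_eq_zero (hMy u 0) (hy_re u 0) (hy_im u 0) y 0

theorem teleparallel_ppwave_vanishing_tensor_part_general
    (M : ℝ → ℝ → ℝ → ℂ) (H : ℝ → ℝ → ℝ → ℝ)
    (hM : ContDiff ℝ 1 (fun p : ℝ × ℝ × ℝ => M p.1 p.2.1 p.2.2))
    (hHd : ContDiff ℝ 1 (fun p : ℝ × ℝ × ℝ => H p.1 p.2.1 p.2.2))
    (hi₁ : ∀ u x y : ℝ, deriv (fun x' => (M u x' y).re) x = 0)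
    (hi₂ : ∀ u x y : ℝ, deriv (fun y' => (M u x y').im) y = 0)
    (hi₃ : ∀ u x y : ℝ, deriv (fun x' => (M u x' y).im) x = 0)
    (hi₄ : ∀ u x y : ℝ, deriv (fun y' => (M u x y').re) y = 0)
    (hiii : ∀ u x y : ℝ,
      (starRingEnd ℂ) (M u x y)
          * (deriv (fun x' => (starRingEnd ℂ) (M u x' y)) x
            + Complex.I * deriv (fun y' => (starRingEnd ℂ) (M u x y')) y)
        + M u x y
          * (deriv (fun x' => (starRingEnd ℂ) (M u x' y)) x
            - Complex.I * deriv (fun y' => (starRingEnd ℂ) (M u x y')) y)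
        - deriv (fun u' => (starRingEnd ℂ) (M u' x y)) u
        + (deriv (fun x' => H u x' y) x : ℂ)
        - Complex.I * (deriv (fun y' => H u x y') y : ℂ) = 0) :
    ∃ (M₀ : ℝ → ℂ) (h : ℝ → ℝ), Differentiable ℝ M₀ ∧
      (∀ u x y : ℝ, M u x y = M₀ u) ∧
      (∀ u x y : ℝ,
        H u x y = x * (deriv M₀ u).re + y * (deriv M₀ u).im + h u) ∧
      (∀ u x y : ℝ,
        (deriv (fun x' => (M u x' y).re) x : ℂ)
          - Complex.I * (deriv (fun y' => (M u x y').im) y : ℂ) = 0 ∧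
        (deriv (fun x' => (M u x' y).im) x : ℂ)
          - Complex.I * (deriv (fun y' => (M u x y').re) y : ℂ) = 0) := by
  obtain ⟨M₀, hM₀d, hM₀⟩ := exists_forall_eq_of_deriv_re_im_eq_zero
    (hM.differentiable one_ne_zero) hi₁ hi₂ hi₃ hi₄
  have hHdiff := hHd.differentiable one_ne_zero
  have hH (u x y : ℝ) : deriv (fun x' => H u x' y) x = (deriv M₀ u).re ∧
      deriv (fun y' => H u x y') y = (deriv M₀ u).im := by
    have h := hiii u x y
    have hconj : deriv (fun u' => starRingEnd ℂ (M₀ u')) u = starRingEnd ℂ (deriv M₀ u) :=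
      deriv.star
    simp only [hM₀, deriv_const, deriv_ofReal_comp, hconj] at h
    rw [← ofReal_sub_I_mul_ofReal_eq_conj_iff]
    linear_combination h
  refine ⟨M₀, fun u => H u 0 0, hM₀d, hM₀, fun u x y => ?_, fun u x y => ?_⟩
  · exact eq_mul_add_mul_add_of_deriv_eq
      (fun y => hHdiff.comp (by fun_prop : Differentiable ℝ fun x' : ℝ => (u, x', y)))
      (fun x => hHdiff.comp (by fun_prop : Differentiable ℝ fun y' : ℝ => (u, x, y')))
      (fun x y => (hH u x y).1) (fun x y => (hH u x y).2) x y
  · simp [deriv_ofReal_comp, hi₁, hi₂, hi₃, hi₄]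

/-- If the tensor part of the torsion of a teleparallel pp-wave vanishes, the frame
functions reduce to M = M₀(u), H = x·Re M₀′ + y·Im M₀′ + h(u), and the whole torsion
tensor vanishes (Minkowski space). -/
theorem teleparallel_ppwave_vanishing_tensor_part
    (M : ℝ → ℝ → ℝ → ℂ) (H : ℝ → ℝ → ℝ → ℝ)
    (hM : ContDiff ℝ 1 (fun p : ℝ × ℝ × ℝ => M p.1 p.2.1 p.2.2))
    (hHd : ContDiff ℝ 1 (fun p : ℝ × ℝ × ℝ => H p.1 p.2.1 p.2.2))
    (hi₁ : ∀ u x y : ℝ, deriv (fun x' => (M u x' y).re) x = 0)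
    (hi₂ : ∀ u x y : ℝ, deriv (fun y' => (M u x y').im) y = 0)
    (hi₃ : ∀ u x y : ℝ, deriv (fun x' => (M u x' y).im) x = 0)
    (hi₄ : ∀ u x y : ℝ, deriv (fun y' => (M u x y').re) y = 0)
    (hii : ∀ u x y : ℝ,
      deriv (fun x' => (starRingEnd ℂ) (M u x' y)) x
        - Complex.I * deriv (fun y' => (starRingEnd ℂ) (M u x y')) y = 0)
    (hiii : ∀ u x y : ℝ,
      (starRingEnd ℂ) (M u x y)
          * (deriv (fun x' => (starRingEnd ℂ) (M u x' y)) x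
            + Complex.I * deriv (fun y' => (starRingEnd ℂ) (M u x y')) y)
        + M u x y
          * (deriv (fun x' => (starRingEnd ℂ) (M u x' y)) x
            - Complex.I * deriv (fun y' => (starRingEnd ℂ) (M u x y')) y)
        - deriv (fun u' => (starRingEnd ℂ) (M u' x y)) u
        + (deriv (fun x' => H u x' y) x : ℂ)
        - Complex.I * (deriv (fun y' => H u x y') y : ℂ) = 0) :
    ∃ (M₀ : ℝ → ℂ) (h : ℝ → ℝ), Differentiable ℝ M₀ ∧
      (∀ u x y : ℝ, M u x y = M₀ u) ∧
      (∀ u x y : ℝ,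
        H u x y = x * (deriv M₀ u).re + y * (deriv M₀ u).im + h u) ∧
      (∀ u x y : ℝ,
        (deriv (fun x' => (M u x' y).re) x : ℂ)
          - Complex.I * (deriv (fun y' => (M u x y').im) y : ℂ) = 0 ∧
        (deriv (fun x' => (M u x' y).im) x : ℂ)
          - Complex.I * (deriv (fun y' => (M u x y').re) y : ℂ) = 0) :=
  teleparallel_ppwave_vanishing_tensor_part_general M H hM hHd hi₁ hi₂ hi₃ hi₄ hiii
end
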